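/- Let s ∈ ℤ and let f be a complex-valued differentiable function of (θ, φ) ∈ (0,π) × ℝ. Then at every point of (0,π) × ℝ one has |Z̃₁f|² + |Z̃₂f|² + |Z̃₃f|² = |∂_θ f|² + (1/sin²θ)·|i·s·cosθ·f + ∂_φ f|² + s²·|f|². -/

import Mathlib

open Set

/-- The spin `s`-weighted angular operator `Z̃₁`. -/
noncomputable def Zt1 (s : ℤ) (f : ℝ → ℝ → ℂ) : ℝ → ℝ → ℂ := fun θ φ =>
  -(Real.sin φ : ℂ) * deriv (fun t => f t φ) θ +
    (Real.cos φ : ℂ) *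
      (-(Complex.I * (s : ℂ) * f θ φ) / (Real.sin θ : ℂ) -
        ((Real.cos θ : ℂ) / (Real.sin θ : ℂ)) * deriv (fun p => f θ p) φ)

/-- The spin `s`-weighted angular operator `Z̃₂`. -/
noncomputable def Zt2 (s : ℤ) (f : ℝ → ℝ → ℂ) : ℝ → ℝ → ℂ := fun θ φ =>
  -(Real.cos φ : ℂ) * deriv (fun t => f t φ) θ -
    (Real.sin φ : ℂ) *
      (-(Complex.I * (s : ℂ) * f θ φ) / (Real.sin θ : ℂ) -
        ((Real.cos θ : ℂ) / (Real.sin θ : ℂ)) * deriv (fun p => f θ p) φ)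

/-- The angular operator `Z̃₃ = ∂_φ`. -/
noncomputable def Zt3 (f : ℝ → ℝ → ℂ) : ℝ → ℝ → ℂ := fun θ φ => deriv (fun p => f θ p) φ

lemma keyNorm (z : ℂ) : ‖z‖^2 = z.re^2 + z.im^2 := by
  rw [Complex.sq_norm, Complex.normSq_apply]; ring

lemma rot (sφ cφ : ℝ) (hφ : sφ^2 + cφ^2 = 1) (x y : ℂ) :
    ‖-(sφ:ℂ) * x + (cφ:ℂ) * y‖^2 + ‖-(cφ:ℂ) * x - (sφ:ℂ) * y‖^2 = ‖x‖^2 + ‖y‖^2 := by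
  simp only [keyNorm, Complex.add_re, Complex.add_im, Complex.sub_re, Complex.sub_im,
    Complex.mul_re, Complex.mul_im, Complex.neg_re, Complex.neg_im,
    Complex.ofReal_re, Complex.ofReal_im]
  linear_combination (x.re^2 + x.im^2 + y.re^2 + y.im^2) * hφ

lemma part2 (s : ℤ) (sθ cθ : ℝ) (hθ : sθ^2 + cθ^2 = 1) (g c : ℂ) :
    ‖-(Complex.I * s * g) - (cθ:ℂ) * c‖^2 + sθ^2 * ‖c‖^2 =
    ‖Complex.I * s * (cθ:ℂ) * g + c‖^2 + (s:ℝ)^2 * sθ^2 * ‖g‖^2 := by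
  simp only [keyNorm, Complex.add_re, Complex.add_im, Complex.sub_re, Complex.sub_im,
    Complex.mul_re, Complex.mul_im, Complex.neg_re, Complex.neg_im,
    Complex.ofReal_re, Complex.ofReal_im, Complex.I_re, Complex.I_im,
    Complex.intCast_re, Complex.intCast_im]
  linear_combination ((c.re^2+c.im^2) - (s:ℝ)^2*(g.re^2+g.im^2)) * hθ

/-- Pointwise identity for the sum of squared moduli of the spin-weighted
angular operators on `(0,π) × ℝ`. -/
theorem stmt_9 (s : ℤ) (f : ℝ → ℝ → ℂ)
    (hf : DifferentiableOn ℝ (fun p : ℝ × ℝ => f p.1 p.2)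
      (Ioo (0 : ℝ) Real.pi ×ˢ (univ : Set ℝ))) :
    ∀ θ ∈ Ioo (0 : ℝ) Real.pi, ∀ φ : ℝ,
      ‖Zt1 s f θ φ‖ ^ 2 + ‖Zt2 s f θ φ‖ ^ 2 + ‖Zt3 f θ φ‖ ^ 2 =
        ‖deriv (fun t => f t φ) θ‖ ^ 2 +
          1 / Real.sin θ ^ 2 *
            ‖Complex.I * (s : ℂ) * (Real.cos θ : ℂ) * f θ φ + deriv (fun p => f θ p) φ‖ ^ 2 +
          (s : ℝ) ^ 2 * ‖f θ φ‖ ^ 2 := by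
  intro θ hθ φ
  have hs : Real.sin θ ≠ 0 := (Real.sin_pos_of_pos_of_lt_pi hθ.1 hθ.2).ne'
  set a := deriv (fun t => f t φ) θ with ha
  set c := deriv (fun p => f θ p) φ with hc
  set g := f θ φ with hg
  set B : ℂ := -(Complex.I * (s : ℂ) * g) / (Real.sin θ : ℂ) -
      ((Real.cos θ : ℂ) / (Real.sin θ : ℂ)) * c with hB
  have h1 : ‖Zt1 s f θ φ‖ ^ 2 + ‖Zt2 s f θ φ‖ ^ 2 + ‖Zt3 f θ φ‖ ^ 2 =
      ‖a‖^2 + ‖B‖^2 + ‖c‖^2 := by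
    have := rot (Real.sin φ) (Real.cos φ) (Real.sin_sq_add_cos_sq φ) a B
    simp only [Zt1, Zt2, Zt3, ← ha, ← hc, ← hg, ← hB]
    linarith [this]
  rw [h1]
  have hBval : B = (-(Complex.I * (s : ℂ) * g) - (Real.cos θ : ℂ) * c) / (Real.sin θ : ℂ) := by
    rw [hB]; ring
  have hnB : ‖B‖^2 = ‖-(Complex.I * (s : ℂ) * g) - (Real.cos θ : ℂ) * c‖^2 / Real.sin θ ^ 2 := by
    rw [hBval, norm_div, div_pow, Complex.norm_real, Real.norm_eq_abs, sq_abs]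
  rw [hnB]
  have h2 := part2 s (Real.sin θ) (Real.cos θ) (Real.sin_sq_add_cos_sq θ) g c
  simp only [Complex.ofReal_cos] at h2 ⊢
  field_simp
  have e : ‖Complex.I * ↑s * g * Complex.cos ↑θ + c‖ ^ 2 = ‖Complex.I * ↑s * Complex.cos ↑θ * g + c‖ ^ 2 := by
    ring_nf
  linear_combination h2 - e
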